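/- The ordinary differential equation system X'(t) = Y(t), Y'(t) = -X(t) on [0, 3π/4] with boundary conditions X(0) = 1 and Y(3π/4) = -X(3π/4) has no solution. -/
import Mathlib


open Real Set

/-- The ODE system X' = Y, Y' = -X on [0, 3π/4] with X(0)=1 and
Y(3π/4) = -X(3π/4) has no solution. -/
theorem stmt_0 :
    ¬ ∃ X Y : ℝ → ℝ,
      (∀ t ∈ Icc (0 : ℝ) (3 * π / 4),
        HasDerivAt X (Y t) t ∧ HasDerivAt Y (-X t) t) ∧
      X 0 = 1 ∧ Y (3 * π / 4) = -X (3 * π / 4) := by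
  rintro ⟨X, Y, hD, hX0, hbd⟩
  have hπ := Real.pi_pos
  have hT : (0 : ℝ) ≤ 3 * π / 4 := by positivity
  have hderiv : ∀ x ∈ Icc (0 : ℝ) (3 * π / 4),
      HasDerivAt (fun t => X t * Real.cos t - Y t * Real.sin t) 0 x := by
    intro x hx
    have h := (((hD x hx).1.mul (Real.hasDerivAt_cos x)).sub
      ((hD x hx).2.mul (Real.hasDerivAt_sin x)))
    have heq : Y x * Real.cos x + X x * -Real.sin x -
        (-X x * Real.sin x + Y x * Real.cos x) = 0 := by ring
    rw [heq] at h
    exact h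
  have key : ∀ x ∈ Icc (0 : ℝ) (3 * π / 4),
      X x * Real.cos x - Y x * Real.sin x = X 0 * Real.cos 0 - Y 0 * Real.sin 0 := by
    apply constant_of_has_deriv_right_zero
    · intro x hx
      exact (hderiv x hx).continuousAt.continuousWithinAt
    · intro x hx
      exact (hderiv x (Ico_subset_Icc_self hx)).hasDerivWithinAt
  have h1 := key (3 * π / 4) (right_mem_Icc.mpr hT)
  have hc : Real.cos (3 * π / 4) = - Real.sin (3 * π / 4) := by
    rw [show (3 * π / 4 : ℝ) = π - π / 4 by ring, Real.cos_pi_sub, Real.sin_pi_sub,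
      Real.cos_pi_div_four, Real.sin_pi_div_four]
  rw [hbd, hc, Real.cos_zero, Real.sin_zero, hX0] at h1
  nlinarith [h1]
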